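/- arXiv:2105.11806 — 2 statements merged into one kernel-verified Lean document; each statement's English description precedes it below -/
import Mathlib

section
/- For all nonnegative integers m and n, the following identity of rational functions in q holds: (−q)^{2mn} / ((q²;q²)_m (q²;q²)_n) = ∑_{d=0}^{min(m,n)} (−q)^{d²} · q^{−d} / ((q²;q²)_{m−d} (q²;q²)_{n−d} (q²;q²)_d). -/
/-!
Put `t = q²`. Since `(-q)^{d²} q^{-d} = (-1)^d t^{d(d-1)/2}`, multiplying the identity by
`(t;t)_m (t;t)_n` turns it into the terminating `q`-binomial identity
`t^{mn} = ∑_d (-1)^d t^{d(d-1)/2} [m choose d]_t (1 - t^n)(1 - t^{n-1}) ⋯ (1 - t^{n-d+1})`,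
which holds in any commutative ring. It follows by induction on `m`: after the `q`-Pascal rule
`[m+1 choose d+1]_t = [m choose d]_t + t^{d+1} [m choose d+1]_t`, the sum for `m + 1`
telescopes to `t^n` times the sum for `m`.
-/

open Finset

section CommRing

variable {R : Type*} [CommRing R]

/-- `(t;t)_k`. -/
def qFactorial (t : R) (k : ℕ) : R := ∏ s ∈ range k, (1 - t ^ (s + 1))

/-- `(1 - t^n)(1 - t^{n-1}) ⋯ (1 - t^{n-d+1})`; for `d > n` the truncated subtraction produces the
factor `1 - t^0 = 0`. -/
def qDescFactorial (t : R) (n d : ℕ) : R := ∏ j ∈ range d, (1 - t ^ (n - j))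

def qChoose (t : R) : ℕ → ℕ → R
  | _, 0 => 1
  | 0, _ + 1 => 0
  | m + 1, d + 1 => qChoose t m d + t ^ (d + 1) * qChoose t m (d + 1)

variable (t : R)

@[simp] lemma qFactorial_zero : qFactorial t 0 = 1 := prod_range_zero _

lemma qFactorial_succ (k : ℕ) : qFactorial t (k + 1) = qFactorial t k * (1 - t ^ (k + 1)) :=
  prod_range_succ _ _

@[simp] lemma qDescFactorial_zero_right (n : ℕ) : qDescFactorial t n 0 = 1 := prod_range_zero _

lemma qDescFactorial_succ_right (n d : ℕ) :
    qDescFactorial t n (d + 1) = qDescFactorial t n d * (1 - t ^ (n - d)) :=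
  prod_range_succ _ _

lemma qDescFactorial_succ_succ (n d : ℕ) :
    qDescFactorial t (n + 1) (d + 1) = (1 - t ^ (n + 1)) * qDescFactorial t n d := by
  simp [qDescFactorial, prod_range_succ', mul_comm]

lemma qDescFactorial_eq_zero_of_lt {n d : ℕ} (h : n < d) : qDescFactorial t n d = 0 :=
  prod_eq_zero (mem_range.mpr h) (by simp)

@[simp] lemma qChoose_zero_right (m : ℕ) : qChoose t m 0 = 1 := by cases m <;> rfl

lemma qChoose_succ_succ (m d : ℕ) :
    qChoose t (m + 1) (d + 1) = qChoose t m d + t ^ (d + 1) * qChoose t m (d + 1) := rfl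

lemma qChoose_eq_zero_of_lt : ∀ {m d : ℕ}, m < d → qChoose t m d = 0
  | 0, _ + 1, _ => rfl
  | m + 1, d + 1, h => by
    rw [qChoose_succ_succ, qChoose_eq_zero_of_lt (by omega), qChoose_eq_zero_of_lt (by omega)]
    ring

lemma qChoose_mul_qFactorial : ∀ n d : ℕ, qChoose t n d * qFactorial t d = qDescFactorial t n d
  | _, 0 => by simp
  | 0, d + 1 => by rw [qChoose, zero_mul, qDescFactorial_eq_zero_of_lt t (by omega)]
  | n + 1, d + 1 => by
    rw [qChoose_succ_succ, add_mul, mul_assoc, qChoose_mul_qFactorial n (d + 1), qFactorial_succ,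
      ← mul_assoc, qChoose_mul_qFactorial n d, qDescFactorial_succ_right,
      qDescFactorial_succ_succ]
    rcases le_or_gt d n with hdn | hnd
    · have hpow : t ^ (d + 1) * t ^ (n - d) = t ^ (n + 1) := by rw [← pow_add]; congr 1; omega
      linear_combination -qDescFactorial t n d * hpow
    · simp [qDescFactorial_eq_zero_of_lt t hnd]

lemma qDescFactorial_mul_qFactorial_sub {n : ℕ} :
    ∀ d ≤ n, qDescFactorial t n d * qFactorial t (n - d) = qFactorial t n
  | 0, _ => by simp
  | d + 1, h => by
    obtain ⟨k, hk⟩ : ∃ k, n - d = k + 1 := ⟨n - (d + 1), by omega⟩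
    rw [qDescFactorial_succ_right, show n - (d + 1) = k by omega,
      ← qDescFactorial_mul_qFactorial_sub (n := n) d (by omega), hk, qFactorial_succ]
    ring

lemma pow_mul_eq_sum_qChoose_mul_qDescFactorial (m n : ℕ) :
    t ^ (m * n) = ∑ d ∈ range (n + 1),
      (-1) ^ d * t ^ d.choose 2 * qChoose t m d * qDescFactorial t n d := by
  induction m with
  | zero => simp [sum_range_succ', qChoose_eq_zero_of_lt]
  | succ m ih =>
    set T : ℕ → R := fun d => (-1) ^ d * t ^ d.choose 2 * qChoose t m d * qDescFactorial t n d
    have hstep : ∀ d ∈ range n,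
        (-1) ^ (d + 1) * t ^ (d + 1).choose 2 * qChoose t (m + 1) (d + 1) *
            qDescFactorial t n (d + 1) =
          (t ^ (d + 1) * T (d + 1) - t ^ d * T d) + t ^ n * T d := by
      intro d hd
      have hpow : t ^ d * t ^ (n - d) = t ^ n := by
        rw [← pow_add]; congr 1; have := mem_range.mp hd; omega
      simp only [T, Nat.choose_succ_succ', Nat.choose_one_right, qChoose_succ_succ,
        qDescFactorial_succ_right, pow_add]
      linear_combination (-1) ^ d * t ^ d.choose 2 * qChoose t m d * qDescFactorial t n d * hpow
    rw [sum_range_succ', sum_congr rfl hstep, sum_add_distrib, sum_range_sub (fun d => t ^ d * T d),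
      ← mul_sum, add_one_mul, pow_add, ih, sum_range_succ _ n]
    simp only [pow_zero, Nat.choose_zero_succ, mul_one, qChoose_zero_right,
      qDescFactorial_zero_right, T]
    ring

end CommRing

section Field

variable {K : Type*} [Field K]

lemma pow_mul_div_qFactorial_mul_qFactorial {t : K} (hF : ∀ k, qFactorial t k ≠ 0) (m n : ℕ) :
    t ^ (m * n) / (qFactorial t m * qFactorial t n) =
      ∑ d ∈ range (min m n + 1), (-1) ^ d * t ^ d.choose 2 /
        (qFactorial t (m - d) * qFactorial t (n - d) * qFactorial t d) := by
  have htrunc : ∑ d ∈ range (min m n + 1),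
      (-1) ^ d * t ^ d.choose 2 * qChoose t m d * qDescFactorial t n d = t ^ (m * n) := by
    rw [pow_mul_eq_sum_qChoose_mul_qDescFactorial]
    refine sum_subset (range_subset_range.mpr (by omega)) fun d hd hd' => ?_
    simp [qChoose_eq_zero_of_lt t (show m < d by simp at hd hd'; omega)]
  rw [← htrunc, sum_div]
  refine sum_congr rfl fun d hd => ?_
  have hdm : d ≤ m := by simp at hd; omega
  have hdn : d ≤ n := by simp at hd; omega
  have hm := qDescFactorial_mul_qFactorial_sub t d hdm
  have hn := qDescFactorial_mul_qFactorial_sub t d hdn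
  rw [← qChoose_mul_qFactorial] at hm
  rw [div_eq_div_iff (by simp [hF]) (by simp [hF])]
  linear_combination (-1) ^ d * t ^ d.choose 2 *
    (qDescFactorial t n d * qFactorial t (n - d) * hm + qFactorial t m * hn)

lemma qFactorial_sq (q : K) (k : ℕ) :
    qFactorial (q ^ 2) k = ∏ s ∈ range k, (1 - q ^ (2 * (s + 1))) := by
  simp only [qFactorial, pow_mul]

lemma neg_pow_sq_mul_inv_pow {q : K} (hq : q ≠ 0) (d : ℕ) :
    (-q) ^ (d ^ 2) * q⁻¹ ^ d = (-1) ^ d * (q ^ 2) ^ d.choose 2 := by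
  have hsq : d ^ 2 = 2 * d.choose 2 + d := by
    induction d with
    | zero => rfl
    | succ d ih => rw [Nat.choose_succ_succ', Nat.choose_one_right]; nlinarith
  rw [hsq, pow_add, pow_mul, neg_sq, neg_pow, mul_assoc, mul_assoc, ← mul_pow,
    mul_inv_cancel₀ hq, one_pow]
  ring

end Field

/-- Coefficient-wise form of the simplest unlinking (multi-cover skein) relation:
`(-q)^{2mn}/((q²;q²)_m (q²;q²)_n)
  = ∑_{d=0}^{min(m,n)} (-q)^{d²} q^{-d} / ((q²;q²)_{m-d}(q²;q²)_{n-d}(q²;q²)_d)`. -/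
theorem stmt_3 {K : Type*} [Field K] (q : K) (hq : q ≠ 0)
    (hpoch : ∀ s : ℕ, 1 ≤ s → (1 : K) - q ^ (2 * s) ≠ 0) (m n : ℕ) :
    (-q) ^ (2 * m * n) /
        ((∏ s ∈ Finset.range m, (1 - q ^ (2 * (s + 1)))) *
          ∏ s ∈ Finset.range n, (1 - q ^ (2 * (s + 1)))) =
      ∑ d ∈ Finset.range (min m n + 1),
        (-q) ^ (d ^ 2) * (q⁻¹) ^ d /
          ((∏ s ∈ Finset.range (m - d), (1 - q ^ (2 * (s + 1)))) *
            (∏ s ∈ Finset.range (n - d), (1 - q ^ (2 * (s + 1)))) *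
            ∏ s ∈ Finset.range d, (1 - q ^ (2 * (s + 1)))) := by
  have hF : ∀ k, qFactorial (q ^ 2) k ≠ 0 := fun k => by
    rw [qFactorial_sq]
    exact prod_ne_zero_iff.mpr fun s _ => hpoch (s + 1) (by omega)
  have hlhs : (-q) ^ (2 * m * n) = (q ^ 2) ^ (m * n) := by
    rw [mul_assoc, pow_mul, neg_sq]
  simp only [← qFactorial_sq, hlhs, neg_pow_sq_mul_inv_pow hq]
  exact pow_mul_div_qFactorial_mul_qFactorial hF m n
end

section
/- Let C be the 5×5 symmetric integer matrix with rows (0,1,1,3,3), (1,2,2,3,3), (1,2,3,4,4), (3,3,4,4,4), (3,3,4,4,5), and let C′ be obtained from C by exchanging C₂₅ ↔ C₃₄ (and symmetric entries), so C′₂₅ = 4 and C′₃₄ = 3. Set λ₁ = a⁴q^{−4}, λ₂ = a⁴q^{−2}t², λ₃ = −a⁶q^{−5}t³, λ₄ = a⁴t⁴, λ₅ = −a⁶q^{−3}t⁵. Then for every N ≥ 0, ∑_{d₁+⋯+d₅=N} (−q)^{∑_{i,j} C_{ij} d_i d_j} ∏ λ_i^{d_i}/(q²;q²)_{d_i} =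 ∑_{d₁+⋯+d₅=N} (−q)^{∑_{i,j} C′_{ij} d_i d_j} ∏ λ_i^{d_i}/(q²;q²)_{d_i} in ℚ(q,a,t). -/
/-!
Group the terms by `(d₁, d₂ + d₃, d₄ + d₅) = (d₁, e, f)`. On such a fibre the two quadratic
forms differ only in the coupling `2 d₃ f` (for `C`) versus `2 d₅ e` (for `C′`), and since
`λ₃ / λ₂ = λ₅ / λ₄ = r` the weights factor too. With `y = -q`, `Q = q²` and
`S_n(x) = ∑_{i+k=n} y^{k²} x^k / ((Q;Q)_i (Q;Q)_k)`, the fibre sums are a common prefactor times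
`S_e(r Q^f) S_f(r)` and `S_e(r) S_f(r Q^e)` respectively. By the `Q`-binomial theorem
`S_n(x) = (-yx; Q)_n / (Q;Q)_n`, and both `(-yr; Q)_f (-yr Q^f; Q)_e` and `(-yr; Q)_e (-yr Q^e; Q)_f`
equal `(-yr; Q)_{e+f}`, so the two products agree.
-/

open Finset

section QAnalogues

variable {K : Type*} [Field K]

def qPochhammer (Q : K) (n : ℕ) : K := ∏ s ∈ range n, (1 - Q ^ (s + 1))

lemma qPochhammer_zero (Q : K) : qPochhammer Q 0 = 1 := prod_range_zero _

lemma qPochhammer_succ (Q : K) (n : ℕ) :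
    qPochhammer Q (n + 1) = qPochhammer Q n * (1 - Q ^ (n + 1)) :=
  prod_range_succ _ _

lemma qPochhammer_ne_zero {Q : K} (hQ : ∀ s : ℕ, 1 ≤ s → 1 - Q ^ s ≠ 0) (n : ℕ) :
    qPochhammer Q n ≠ 0 :=
  prod_ne_zero_iff.mpr fun s _ => hQ (s + 1) s.succ_pos

def qBinomial (Q : K) : ℕ → ℕ → K
  | _, 0 => 1
  | 0, _ + 1 => 0
  | n + 1, k + 1 => qBinomial Q n k + Q ^ (k + 1) * qBinomial Q n (k + 1)

lemma qBinomial_of_lt (Q : K) {n k : ℕ} (h : n < k) : qBinomial Q n k = 0 := by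
  induction n generalizing k with
  | zero => obtain ⟨k, rfl⟩ := Nat.exists_eq_succ_of_ne_zero h.ne'; rfl
  | succ n ih =>
    obtain ⟨k, rfl⟩ := Nat.exists_eq_succ_of_ne_zero (Nat.ne_zero_of_lt h)
    simp only [qBinomial, ih (by omega : n < k), ih (by omega : n < k + 1), mul_zero, add_zero]

lemma qBinomial_mul_qPochhammer (Q : K) (m k : ℕ) :
    qBinomial Q (m + k) k * (qPochhammer Q k * qPochhammer Q m) = qPochhammer Q (m + k) := by
  induction k generalizing m with
  | zero => simp [qBinomial, qPochhammer_zero]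
  | succ k ihk =>
    induction m with
    | zero =>
      have h := ihk 0
      simp only [zero_add, qPochhammer_zero, mul_one] at h ⊢
      rw [qBinomial, qBinomial_of_lt Q k.lt_succ_self, mul_zero, add_zero, qPochhammer_succ]
      linear_combination (1 - Q ^ (k + 1)) * h
    | succ m ihm =>
      have h := ihk (m + 1)
      rw [show m + (k + 1) = m + 1 + k by ring] at ihm
      rw [show m + 1 + (k + 1) = m + 1 + k + 1 from rfl, qBinomial, qPochhammer_succ Q (m + 1 + k)]
      rw [qPochhammer_succ Q m] at h ⊢
      rw [qPochhammer_succ Q k] at ihm ⊢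
      linear_combination (1 - Q ^ (k + 1)) * h + Q ^ (k + 1) * (1 - Q ^ (m + 1)) * ihm

theorem sum_range_qBinomial_mul_eq_prod {Q y : K} (hy : y ^ 2 = Q) (n : ℕ) (x : K) :
    ∑ k ∈ range (n + 1), y ^ (k ^ 2) * x ^ k * qBinomial Q n k =
      ∏ j ∈ range n, (1 + y * x * Q ^ j) := by
  induction n generalizing x with
  | zero => simp [qBinomial]
  | succ n ih =>
    have hlow : ∑ k ∈ range (n + 1), y ^ ((k + 1) ^ 2) * x ^ (k + 1) * qBinomial Q n k =
        y * x * ∑ k ∈ range (n + 1), y ^ (k ^ 2) * (x * Q) ^ k * qBinomial Q n k := by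
      rw [mul_sum]
      refine sum_congr rfl fun k _ => ?_
      rw [← hy]; ring
    have hhigh : ∑ k ∈ range (n + 1),
          y ^ ((k + 1) ^ 2) * x ^ (k + 1) * (Q ^ (k + 1) * qBinomial Q n (k + 1)) + 1 =
        ∑ k ∈ range (n + 1), y ^ (k ^ 2) * (x * Q) ^ k * qBinomial Q n k := by
      calc _ = ∑ k ∈ range (n + 2), y ^ (k ^ 2) * (x * Q) ^ k * qBinomial Q n k := by
            rw [sum_range_succ' (fun k => y ^ (k ^ 2) * (x * Q) ^ k * qBinomial Q n k)]
            congr 1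
            · exact sum_congr rfl fun k _ => by ring
            · simp [qBinomial]
        _ = _ := by rw [sum_range_succ, qBinomial_of_lt Q n.lt_succ_self, mul_zero, add_zero]
    have hprod : ∏ j ∈ range n, (1 + y * x * Q ^ (j + 1)) =
        ∏ j ∈ range n, (1 + y * (x * Q) * Q ^ j) :=
      prod_congr rfl fun j _ => by ring
    rw [sum_range_succ', prod_range_succ']
    simp only [qBinomial, mul_add, sum_add_distrib]
    linear_combination hlow + hhigh + (1 + y * x) * ih (x * Q) - (1 + y * x) * hprod

def qBinomSum (Q y : K) (n : ℕ) (x : K) : K :=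
  ∑ u ∈ antidiagonal n, y ^ (u.2 ^ 2) * x ^ u.2 / (qPochhammer Q u.1 * qPochhammer Q u.2)

lemma qBinomSum_eq_div {Q y : K} (hy : y ^ 2 = Q) (hQ : ∀ n, qPochhammer Q n ≠ 0)
    (n : ℕ) (x : K) :
    qBinomSum Q y n x = (∏ j ∈ range n, (1 + y * x * Q ^ j)) / qPochhammer Q n := by
  rw [qBinomSum, ← Nat.sum_antidiagonal_swap, Nat.sum_antidiagonal_eq_sum_range_succ_mk,
    ← sum_range_qBinomial_mul_eq_prod hy, sum_div]
  refine sum_congr rfl fun k hk => ?_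
  obtain ⟨m, rfl⟩ := Nat.exists_eq_add_of_le (Nat.lt_succ_iff.mp (mem_range.mp hk))
  have h := qBinomial_mul_qPochhammer Q m k
  rw [add_comm m k] at h
  simp only [Prod.swap_prod_mk, Nat.add_sub_cancel_left]
  field_simp [hQ]
  linear_combination -(y ^ (k ^ 2) * x ^ k) * h

lemma qBinomSum_shift_mul_comm {Q y : K} (hy : y ^ 2 = Q) (hQ : ∀ n, qPochhammer Q n ≠ 0)
    (e f : ℕ) (x : K) :
    qBinomSum Q y e (x * Q ^ f) * qBinomSum Q y f x =
      qBinomSum Q y e x * qBinomSum Q y f (x * Q ^ e) := by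
  have hsplit (m n : ℕ) : (∏ j ∈ range m, (1 + y * x * Q ^ j)) *
      ∏ j ∈ range n, (1 + y * (x * Q ^ m) * Q ^ j) = ∏ j ∈ range (m + n), (1 + y * x * Q ^ j) := by
    rw [prod_range_add]
    exact congrArg _ (prod_congr rfl fun j _ => by ring)
  simp only [qBinomSum_eq_div hy hQ, div_mul_div_comm]
  rw [mul_comm (∏ j ∈ range e, _), hsplit, hsplit, add_comm, mul_comm (qPochhammer Q e)]

end QAnalogues

lemma filter_piFinset_range_sum_eq_antidiagonalTuple (k N : ℕ) :
    {d ∈ Fintype.piFinset fun _ : Fin k => range (N + 1) | ∑ i, d i = N} =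
      Nat.antidiagonalTuple k N := by
  ext d
  simp only [mem_filter, Fintype.mem_piFinset, mem_range, Nat.mem_antidiagonalTuple,
    and_iff_right_iff_imp]
  intro hsum i
  rw [Nat.lt_succ_iff, ← hsum]
  exact single_le_sum (fun _ _ => Nat.zero_le _) (mem_univ i)

lemma sum_antidiagonalTuple_five {M : Type*} [AddCommMonoid M] (N : ℕ)
    (F : (Fin 5 → ℕ) → M) :
    ∑ d ∈ Nat.antidiagonalTuple 5 N, F d =
      ∑ p ∈ Nat.antidiagonalTuple 3 N, ∑ u ∈ antidiagonal (p 1), ∑ v ∈ antidiagonal (p 2),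
        F ![p 0, u.1, u.2, v.1, v.2] := by
  have hmaps : ∀ d ∈ Nat.antidiagonalTuple 5 N,
      ![d 0, d 1 + d 2, d 3 + d 4] ∈ Nat.antidiagonalTuple 3 N := by
    intro d hd
    simp only [Nat.mem_antidiagonalTuple, Fin.sum_univ_five, Fin.sum_univ_three] at hd ⊢
    simp only [Matrix.cons_val]
    omega
  rw [← sum_fiberwise_of_maps_to hmaps]
  refine sum_congr rfl fun p hp => ?_
  rw [← sum_product']
  refine sum_nbij' (fun d => ((d 1, d 2), (d 3, d 4)))
    (fun w => ![p 0, w.1.1, w.1.2, w.2.1, w.2.2]) ?_ ?_ ?_ ?_ ?_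
  · intro d hd
    simp only [mem_filter] at hd
    obtain ⟨-, rfl⟩ := hd
    simp [mem_product, HasAntidiagonal.mem_antidiagonal]
  · intro w hw
    simp only [mem_product, HasAntidiagonal.mem_antidiagonal] at hw
    simp only [Nat.mem_antidiagonalTuple, Fin.sum_univ_three] at hp
    simp only [mem_filter, Nat.mem_antidiagonalTuple, Fin.sum_univ_five]
    refine ⟨?_, ?_⟩
    · simp only [Matrix.cons_val]; omega
    · ext i; fin_cases i <;> simp [hw.1, hw.2]
  · intro d hd
    simp only [mem_filter] at hd
    ext i; fin_cases i <;> simp [← hd.2]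
  · intro w hw
    rfl
  · intro d hd
    simp only [mem_filter] at hd
    congr 1
    ext i; fin_cases i <;> simp [← hd.2]

section CinquefoilQuivers

def quiverC : Matrix (Fin 5) (Fin 5) ℤ :=
  !![0, 1, 1, 3, 3; 1, 2, 2, 3, 3; 1, 2, 3, 4, 4; 3, 3, 4, 4, 4; 3, 3, 4, 4, 5]

def quiverC' : Matrix (Fin 5) (Fin 5) ℤ :=
  !![0, 1, 1, 3, 3; 1, 2, 2, 3, 4; 1, 2, 3, 3, 4; 3, 3, 3, 4, 4; 3, 4, 4, 4, 5]

lemma quiverC_quadForm {d₁ e f m b n c : ℕ} (he : m + b = e) (hf : n + c = f) :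
    ∑ i, ∑ j, quiverC i j * ((![d₁, m, b, n, c] : Fin 5 → ℕ) i : ℤ) * (![d₁, m, b, n, c] j : ℤ) =
      ((2 * d₁ * e + 6 * d₁ * f + 2 * e ^ 2 + 6 * e * f + 4 * f ^ 2
        + b ^ 2 + c ^ 2 + 2 * (f * b + 0 * c) : ℕ) : ℤ) := by
  subst he hf
  simp only [quiverC, Matrix.of_apply, Matrix.cons_val', Matrix.cons_val_fin_one,
    Fin.sum_univ_five, Matrix.cons_val_zero, Matrix.cons_val_one, Matrix.cons_val,
    Nat.cast_add, Nat.cast_mul, Nat.cast_ofNat, Nat.cast_pow, Nat.cast_zero]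
  ring

lemma quiverC'_quadForm {d₁ e f m b n c : ℕ} (he : m + b = e) (hf : n + c = f) :
    ∑ i, ∑ j, quiverC' i j * ((![d₁, m, b, n, c] : Fin 5 → ℕ) i : ℤ) * (![d₁, m, b, n, c] j : ℤ) =
      ((2 * d₁ * e + 6 * d₁ * f + 2 * e ^ 2 + 6 * e * f + 4 * f ^ 2
        + b ^ 2 + c ^ 2 + 2 * (0 * b + e * c) : ℕ) : ℤ) := by
  subst he hf
  simp only [quiverC', Matrix.of_apply, Matrix.cons_val', Matrix.cons_val_fin_one,
    Fin.sum_univ_five, Matrix.cons_val_zero, Matrix.cons_val_one, Matrix.cons_val,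
    Nat.cast_add, Nat.cast_mul, Nat.cast_ofNat, Nat.cast_pow, Nat.cast_zero]
  ring

variable {K : Type*} [Field K]

lemma prod_pow_div_of_ratio (lam : Fin 5 → K) (r : K)
    (h₂ : lam 2 = lam 1 * r) (h₄ : lam 4 = lam 3 * r) (P : ℕ → K) (d₁ m b n c : ℕ) :
    ∏ i, lam i ^ (![d₁, m, b, n, c] : Fin 5 → ℕ) i / P (![d₁, m, b, n, c] i) =
      lam 0 ^ d₁ * lam 1 ^ (m + b) * lam 3 ^ (n + c) / P d₁ *
        (r ^ b / (P m * P b)) * (r ^ c / (P n * P c)) := by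
  simp only [prod_div_distrib, Fin.prod_univ_five, Matrix.cons_val_zero, Matrix.cons_val_one,
    Matrix.cons_val, h₂, h₄]
  ring

lemma sum_antidiagonal_eq_mul_qBinomSum {Q y r : K} {lam : Fin 5 → K} (hy : y ^ 2 = Q)
    (h₂ : lam 2 = lam 1 * r) (h₄ : lam 4 = lam 3 * r) (C : Matrix (Fin 5) (Fin 5) ℤ)
    {d₁ e f k₀ α β : ℕ} (hC : ∀ m b n c, m + b = e → n + c = f →
      ∑ i, ∑ j, C i j * ((![d₁, m, b, n, c] : Fin 5 → ℕ) i : ℤ) * (![d₁, m, b, n, c] j : ℤ) =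
        ((k₀ + b ^ 2 + c ^ 2 + 2 * (α * b + β * c) : ℕ) : ℤ)) :
    ∑ u ∈ antidiagonal e, ∑ v ∈ antidiagonal f,
      y ^ (∑ i, ∑ j, C i j * ((![d₁, u.1, u.2, v.1, v.2] : Fin 5 → ℕ) i : ℤ) *
          (![d₁, u.1, u.2, v.1, v.2] j : ℤ)) *
        ∏ i, lam i ^ (![d₁, u.1, u.2, v.1, v.2] : Fin 5 → ℕ) i /
          qPochhammer Q (![d₁, u.1, u.2, v.1, v.2] i) =
      y ^ k₀ * lam 0 ^ d₁ * lam 1 ^ e * lam 3 ^ f / qPochhammer Q d₁ *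
        (qBinomSum Q y e (r * Q ^ α) * qBinomSum Q y f (r * Q ^ β)) := by
  rw [qBinomSum, qBinomSum, sum_mul_sum, mul_sum]
  refine sum_congr rfl fun u hu => ?_
  rw [mul_sum]
  refine sum_congr rfl fun v hv => ?_
  rw [HasAntidiagonal.mem_antidiagonal] at hu hv
  rw [hC _ _ _ _ hu hv, zpow_natCast, prod_pow_div_of_ratio lam r h₂ h₄, hu, hv, ← hy]
  ring

end CinquefoilQuivers

theorem stmt_12_general {K : Type*} [Field K] (q a t : K)
    (hpoch : ∀ s : ℕ, 1 ≤ s → (1 : K) - q ^ (2 * s) ≠ 0)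
    (C C' : Matrix (Fin 5) (Fin 5) ℤ)
    (hC : C = !![0, 1, 1, 3, 3;
                 1, 2, 2, 3, 3;
                 1, 2, 3, 4, 4;
                 3, 3, 4, 4, 4;
                 3, 3, 4, 4, 5])
    (hC' : C' = !![0, 1, 1, 3, 3;
                   1, 2, 2, 3, 4;
                   1, 2, 3, 3, 4;
                   3, 3, 3, 4, 4;
                   3, 4, 4, 4, 5])
    (lam : Fin 5 → K)
    (hlam : lam = ![a ^ 4 * q ^ (-4 : ℤ), a ^ 4 * q ^ (-2 : ℤ) * t ^ 2,
      -(a ^ 6 * q ^ (-5 : ℤ) * t ^ 3), a ^ 4 * t ^ 4,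
      -(a ^ 6 * q ^ (-3 : ℤ) * t ^ 5)])
    (N : ℕ) :
    ∑ dv ∈ (Fintype.piFinset fun _ : Fin 5 => Finset.range (N + 1)).filter
        (fun dv => ∑ i, dv i = N),
      (-q) ^ (∑ i, ∑ j, C i j * (dv i : ℤ) * (dv j : ℤ)) *
        ∏ i, (lam i ^ dv i / ∏ s ∈ Finset.range (dv i), (1 - q ^ (2 * (s + 1)))) =
    ∑ dv ∈ (Fintype.piFinset fun _ : Fin 5 => Finset.range (N + 1)).filter
        (fun dv => ∑ i, dv i = N),
      (-q) ^ (∑ i, ∑ j, C' i j * (dv i : ℤ) * (dv j : ℤ)) *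
        ∏ i, (lam i ^ dv i / ∏ s ∈ Finset.range (dv i), (1 - q ^ (2 * (s + 1)))) := by
  obtain rfl : C = quiverC := hC
  obtain rfl : C' = quiverC' := hC'
  have hy : (-q) ^ 2 = q ^ 2 := neg_sq q
  have hQ : ∀ n, qPochhammer (q ^ 2) n ≠ 0 :=
    qPochhammer_ne_zero fun s hs => by rw [← pow_mul]; exact hpoch s hs
  have hP (n : ℕ) : ∏ s ∈ range n, (1 - q ^ (2 * (s + 1))) = qPochhammer (q ^ 2) n := by
    simp only [qPochhammer, pow_mul]
  -- the condition `λ₂λ₅ = λ₃λ₄` in the form `λ₃ = λ₂ r`, `λ₅ = λ₄ r` (`lam` is 0-indexed)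
  have h₂ : lam 2 = lam 1 * -(a ^ 2 * t * q ^ (-3 : ℤ)) := by
    simp only [hlam, zpow_neg, zpow_ofNat, Matrix.cons_val, Matrix.cons_val_one,
      Matrix.cons_val_zero]
    ring
  have h₄ : lam 4 = lam 3 * -(a ^ 2 * t * q ^ (-3 : ℤ)) := by
    simp only [hlam, zpow_neg, zpow_ofNat, Matrix.cons_val, Matrix.cons_val_one,
      Matrix.cons_val_zero]
    ring
  simp only [hP, filter_piFinset_range_sum_eq_antidiagonalTuple, sum_antidiagonalTuple_five]
  refine sum_congr rfl fun p _ => ?_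
  rw [sum_antidiagonal_eq_mul_qBinomSum hy h₂ h₄ _ fun _ _ _ _ => quiverC_quadForm,
    sum_antidiagonal_eq_mul_qBinomSum hy h₂ h₄ _ fun _ _ _ _ => quiverC'_quadForm,
    pow_zero, mul_one, qBinomSum_shift_mul_comm hy hQ]

/-- Two of the equivalent quivers for the cinquefoil knot `5₁`, differing by the
transposition `C₂₅ ↔ C₃₄`, have equal specialized motivic generating series,
degree by degree in the overall variable. -/
theorem stmt_12 {K : Type*} [Field K] (q a t : K)
    (hq : q ≠ 0) (ha : a ≠ 0) (ht : t ≠ 0)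
    (hpoch : ∀ s : ℕ, 1 ≤ s → (1 : K) - q ^ (2 * s) ≠ 0)
    (C C' : Matrix (Fin 5) (Fin 5) ℤ)
    (hC : C = !![0, 1, 1, 3, 3;
                 1, 2, 2, 3, 3;
                 1, 2, 3, 4, 4;
                 3, 3, 4, 4, 4;
                 3, 3, 4, 4, 5])
    (hC' : C' = !![0, 1, 1, 3, 3;
                   1, 2, 2, 3, 4;
                   1, 2, 3, 3, 4;
                   3, 3, 3, 4, 4;
                   3, 4, 4, 4, 5])
    (lam : Fin 5 → K)
    (hlam : lam = ![a ^ 4 * q ^ (-4 : ℤ), a ^ 4 * q ^ (-2 : ℤ) * t ^ 2,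
      -(a ^ 6 * q ^ (-5 : ℤ) * t ^ 3), a ^ 4 * t ^ 4,
      -(a ^ 6 * q ^ (-3 : ℤ) * t ^ 5)])
    (N : ℕ) :
    ∑ dv ∈ (Fintype.piFinset fun _ : Fin 5 => Finset.range (N + 1)).filter
        (fun dv => ∑ i, dv i = N),
      (-q) ^ (∑ i, ∑ j, C i j * (dv i : ℤ) * (dv j : ℤ)) *
        ∏ i, (lam i ^ dv i / ∏ s ∈ Finset.range (dv i), (1 - q ^ (2 * (s + 1)))) =
    ∑ dv ∈ (Fintype.piFinset fun _ : Fin 5 => Finset.range (N + 1)).filter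
        (fun dv => ∑ i, dv i = N),
      (-q) ^ (∑ i, ∑ j, C' i j * (dv i : ℤ) * (dv j : ℤ)) *
        ∏ i, (lam i ^ dv i / ∏ s ∈ Finset.range (dv i), (1 - q ^ (2 * (s + 1)))) :=
  stmt_12_general q a t hpoch C C' hC hC' lam hlam N
end
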